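/- A map μ : S_ω → [0,∞] with μ(∅) = 0 is σ-additive on the semiring S_ω if and only if for all u ∈ A*, μ(Cone_ω(u)) = Σ_{a∈A} μ(Cone_ω(ua)). -/

import Mathlib

open MeasureTheory ENNReal

/-- The ω-cone of a finite word `u`. -/
def ConeOmega {A : Type*} (u : List A) : Set (ℕ → A) :=
  {v | ∀ i : Fin u.length, v i = u.get i}

/-- `S_ω`: the empty set together with all ω-cones. -/
def SOmega (A : Type*) : Set (Set (ℕ → A)) :=
  {∅} ∪ {s | ∃ u : List A, s = ConeOmega u}

/-- σ-additivity of a set function on a collection `C`. -/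
def SigmaAdditiveOn {W : Type*} (C : Set (Set W)) (μ : Set W → ℝ≥0∞) : Prop :=
  ∀ S : ℕ → Set W, (∀ n, S n ∈ C) → (Pairwise fun m n => Disjoint (S m) (S n)) →
    (⋃ n, S n) ∈ C → μ (⋃ n, S n) = ∑' n, μ (S n)

/-!
One direction is σ-additivity applied to the partition of `Cone u` into the cones `Cone (u ++ [a])`.

Conversely, give `A` the discrete topology: cones are clopen in the compact space `ℕ → A`, so a
disjoint family of cones whose union lies in `S_ω` has only finitely many nonempty members. A finite
family is handled by refining everything to cones of a common depth `N`: iterating the hypothesis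
gives `μ (Cone w) = Σ μ (Cone f)` over the words `f` of length `N` extending `w`, and since two
cones are either nested or disjoint, each depth-`N` cone inside the union lies in exactly one
member of the family.
-/

open Function

theorem IsCompact.exists_finset_eq_empty_of_pairwise_disjoint {X ι : Type*} [TopologicalSpace X]
    {S : ι → Set X} (hK : IsCompact (⋃ i, S i)) (hopen : ∀ i, IsOpen (S i))
    (hdisj : Pairwise (Disjoint on S)) : ∃ t : Finset ι, ∀ i ∉ t, S i = ∅ := by
  obtain ⟨t, ht⟩ := hK.elim_finite_subcover S hopen subset_rfl
  refine ⟨t, fun i hi => Set.eq_empty_of_forall_notMem fun x hx => ?_⟩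
  obtain ⟨j, hj, hxj⟩ := Set.mem_iUnion₂.mp (ht (Set.mem_iUnion_of_mem i hx))
  exact Set.disjoint_left.mp (hdisj (ne_of_mem_of_not_mem hj hi).symm) hx hxj

theorem SigmaAdditiveOn.measure_iUnion {W ι : Type*} [Countable ι] {C : Set (Set W)}
    {μ : Set W → ℝ≥0∞} (hμ : SigmaAdditiveOn C μ) (hC : ∅ ∈ C) (h0 : μ ∅ = 0)
    {s : ι → Set W} (hs : ∀ i, s i ∈ C) (hdisj : Pairwise (Disjoint on s))
    (hU : (⋃ i, s i) ∈ C) : μ (⋃ i, s i) = ∑' i, μ (s i) := by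
  obtain ⟨e, he⟩ := Countable.exists_injective_nat ι
  have hUe : (⋃ n, extend e s ⊥ n) = ⋃ i, s i := iSup_extend_bot he s
  have hμe : (fun n => μ (extend e s ⊥ n)) = extend e (μ ∘ s) 0 := by
    ext n
    rw [apply_extend μ]
    congr
    funext
    exact h0
  have hmem : ∀ n, extend e s ⊥ n ∈ C := by
    intro n
    by_cases hn : ∃ i, e i = n
    · obtain ⟨i, rfl⟩ := hn
      rw [he.extend_apply]
      exact hs i
    · rw [extend_apply' _ _ _ hn]
      exact hC
  rw [← hUe, hμ _ hmem (hdisj.disjoint_extend_bot (he.factorsThrough s)) (hUe ▸ hU), hμe,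
    tsum_extend_zero he]
  rfl

open Classical in
theorem ite_subset_biUnion_eq_sum {X ι M : Type*} [AddCommMonoid M] {C : Set X}
    (hC : C.Nonempty) {t : Finset ι} {s : ι → Set X} (hdisj : (t : Set ι).PairwiseDisjoint s)
    (hdich : ∀ i ∈ t, C ⊆ s i ∨ Disjoint C (s i)) (x : M) :
    (if C ⊆ ⋃ i ∈ t, s i then x else 0) = ∑ i ∈ t, if C ⊆ s i then x else 0 := by
  by_cases hCU : C ⊆ ⋃ i ∈ t, s i
  · obtain ⟨p, hp⟩ := hC
    obtain ⟨i₀, hi₀, hpi₀⟩ := Set.mem_iUnion₂.mp (hCU hp)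
    have hCi₀ : C ⊆ s i₀ :=
      (hdich i₀ hi₀).resolve_right fun h => Set.disjoint_left.mp h hp hpi₀
    rw [if_pos hCU, Finset.sum_eq_single_of_mem i₀ hi₀ fun i hi hne => if_neg fun hCi =>
      Set.disjoint_left.mp (hdisj hi hi₀ hne) (hCi hp) hpi₀, if_pos hCi₀]
  · rw [if_neg hCU]
    exact (Finset.sum_eq_zero fun i hi => if_neg fun hCi => hCU (hCi.trans
      (Set.subset_biUnion_of_mem hi))).symm

section Cones

variable {A : Type*}

theorem mem_coneOmega {v : ℕ → A} {u : List A} :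
    v ∈ ConeOmega u ↔ ∀ (i : ℕ) (h : i < u.length), v i = u[i] :=
  ⟨fun hv i h => hv ⟨i, h⟩, fun hv i => hv i i.isLt⟩

theorem coneOmega_mono {u l : List A} (h : u <+: l) : ConeOmega l ⊆ ConeOmega u := by
  intro v hv
  rw [mem_coneOmega] at hv ⊢
  intro i hi
  rw [hv i (hi.trans_le h.length_le), h.getElem hi]

theorem prefix_of_mem_coneOmega {v : ℕ → A} {u l : List A} (hu : v ∈ ConeOmega u)
    (hl : v ∈ ConeOmega l) (h : u.length ≤ l.length) : u <+: l := by
  rw [mem_coneOmega] at hu hl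
  rw [List.prefix_iff_eq_take]
  refine List.ext_getElem (by simp [h]) fun i h₁ _ => ?_
  rw [List.getElem_take, ← hu i h₁, hl i (h₁.trans_le h)]

theorem coneOmega_subset_or_disjoint {u l : List A} (h : u.length ≤ l.length) :
    ConeOmega l ⊆ ConeOmega u ∨ Disjoint (ConeOmega l) (ConeOmega u) := by
  by_cases hul : u <+: l
  · exact Or.inl (coneOmega_mono hul)
  · exact Or.inr (Set.disjoint_left.mpr fun v hl hu => hul (prefix_of_mem_coneOmega hu hl h))

theorem coneOmega_nonempty [Nonempty A] (u : List A) : (ConeOmega u).Nonempty := by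
  obtain ⟨a⟩ := ‹Nonempty A›
  refine ⟨fun i => u.getD i a, mem_coneOmega.mpr fun i h => ?_⟩
  simp [h]

theorem coneOmega_subset_iff [Nonempty A] {u l : List A} (h : u.length ≤ l.length) :
    ConeOmega l ⊆ ConeOmega u ↔ u <+: l := by
  refine ⟨fun hlu => ?_, coneOmega_mono⟩
  obtain ⟨v, hv⟩ := coneOmega_nonempty l
  exact prefix_of_mem_coneOmega (hlu hv) hv h

theorem coneOmega_eq_iUnion_append (u : List A) :
    ConeOmega u = ⋃ a, ConeOmega (u ++ [a]) := by
  refine subset_antisymm (fun v hv => Set.mem_iUnion.mpr ⟨v u.length, ?_⟩)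
    (Set.iUnion_subset fun a => coneOmega_mono (List.prefix_append u [a]))
  rw [mem_coneOmega] at hv ⊢
  intro i hi
  rw [List.length_append, List.length_singleton, Nat.lt_succ_iff_lt_or_eq] at hi
  rcases hi with hi | rfl
  · rw [hv i hi, List.getElem_append_left hi]
  · simp

theorem pairwise_disjoint_coneOmega_append (u : List A) :
    Pairwise (Disjoint on fun a => ConeOmega (u ++ [a])) := by
  intro a b hab
  refine Set.disjoint_left.mpr fun v ha hb => hab ?_
  have h := prefix_of_mem_coneOmega ha hb (by simp)
  simpa using h.eq_of_length (by simp)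

theorem isClopen_coneOmega [TopologicalSpace A] [DiscreteTopology A] (u : List A) :
    IsClopen (ConeOmega u) := by
  have h : ConeOmega u = ⋂ i : Fin u.length, (fun v : ℕ → A => v i) ⁻¹' {u.get i} := by
    ext v
    simp [ConeOmega]
  rw [h]
  exact isClopen_iInter_of_finite fun i => (isClopen_discrete _).preimage (continuous_apply _)

theorem isClopen_of_mem_sOmega [TopologicalSpace A] [DiscreteTopology A] {s : Set (ℕ → A)}
    (hs : s ∈ SOmega A) : IsClopen s := by
  rcases hs with rfl | ⟨u, rfl⟩
  · exact isClopen_empty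
  · exact isClopen_coneOmega u

theorem eventually_coneOmega_subset_or_disjoint {s : Set (ℕ → A)} (hs : s ∈ SOmega A) :
    ∀ᶠ N in Filter.atTop, ∀ f : Fin N → A,
      ConeOmega (List.ofFn f) ⊆ s ∨ Disjoint (ConeOmega (List.ofFn f)) s := by
  rcases hs with rfl | ⟨u, rfl⟩
  · exact Filter.Eventually.of_forall fun _ _ => Or.inr (Set.disjoint_empty _)
  · exact (Filter.eventually_ge_atTop u.length).mono fun N hN _ =>
      coneOmega_subset_or_disjoint (by simpa using hN)

theorem exists_finset_eq_empty_of_iUnion_mem_sOmega [Finite A] {ι : Type*}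
    {S : ι → Set (ℕ → A)} (hS : ∀ i, S i ∈ SOmega A) (hdisj : Pairwise (Disjoint on S))
    (hU : (⋃ i, S i) ∈ SOmega A) : ∃ t : Finset ι, ∀ i ∉ t, S i = ∅ := by
  let _ : TopologicalSpace A := ⊥
  have : DiscreteTopology A := ⟨rfl⟩
  exact (isClopen_of_mem_sOmega hU).isClosed.isCompact.exists_finset_eq_empty_of_pairwise_disjoint
    (fun i => (isClopen_of_mem_sOmega (hS i)).isOpen) hdisj

end Cones

section DepthSum

variable {A : Type*} [Fintype A]

open Classical in
noncomputable def depthSum (μ : Set (ℕ → A) → ℝ≥0∞) (N : ℕ) (s : Set (ℕ → A)) : ℝ≥0∞ :=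
  ∑ f : Fin N → A, if ConeOmega (List.ofFn f) ⊆ s then μ (ConeOmega (List.ofFn f)) else 0

theorem depthSum_biUnion [Nonempty A] (μ : Set (ℕ → A) → ℝ≥0∞) {N : ℕ} {ι : Type*}
    {t : Finset ι} {s : ι → Set (ℕ → A)} (hdisj : (t : Set ι).PairwiseDisjoint s)
    (hdich : ∀ i ∈ t, ∀ f : Fin N → A,
      ConeOmega (List.ofFn f) ⊆ s i ∨ Disjoint (ConeOmega (List.ofFn f)) (s i)) :
    depthSum μ N (⋃ i ∈ t, s i) = ∑ i ∈ t, depthSum μ N (s i) := by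
  unfold depthSum
  rw [Finset.sum_comm]
  refine Finset.sum_congr rfl fun f _ => ?_
  exact ite_subset_biUnion_eq_sum (coneOmega_nonempty _) hdisj (fun i hi => hdich i hi f) _

theorem depthSum_empty [Nonempty A] (μ : Set (ℕ → A) → ℝ≥0∞) (N : ℕ) : depthSum μ N ∅ = 0 :=
  Finset.sum_eq_zero fun _ _ =>
    if_neg fun h => Set.not_nonempty_empty ((coneOmega_nonempty _).mono h)

theorem depthSum_coneOmega_length [Nonempty A] (μ : Set (ℕ → A) → ℝ≥0∞) (u : List A) :
    depthSum μ u.length (ConeOmega u) = μ (ConeOmega u) := by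
  unfold depthSum
  rw [Finset.sum_eq_single_of_mem u.get (Finset.mem_univ _), List.ofFn_get, if_pos subset_rfl]
  intro f _ hf
  refine if_neg fun h => hf ?_
  rw [coneOmega_subset_iff (by simp)] at h
  exact List.ofFn_inj.mp ((h.eq_of_length (by simp)).symm.trans (List.ofFn_get u).symm)

theorem depthSum_coneOmega [Nonempty A] {μ : Set (ℕ → A) → ℝ≥0∞}
    (hμ : ∀ u : List A, μ (ConeOmega u) = ∑ a : A, μ (ConeOmega (u ++ [a])))
    {u : List A} {N : ℕ} (hN : u.length ≤ N) : depthSum μ N (ConeOmega u) = μ (ConeOmega u) := by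
  obtain ⟨d, rfl⟩ := Nat.exists_eq_add_of_le hN
  induction d generalizing u with
  | zero => exact depthSum_coneOmega_length μ u
  | succ d ih =>
    have hchild : ∀ a, depthSum μ (u.length + (d + 1)) (ConeOmega (u ++ [a])) =
        μ (ConeOmega (u ++ [a])) := fun a => by
      simpa [Nat.add_assoc, Nat.add_comm 1 d] using ih (u := u ++ [a]) (by simp)
    have hdich : ∀ a ∈ Finset.univ, ∀ f : Fin (u.length + (d + 1)) → A,
        ConeOmega (List.ofFn f) ⊆ ConeOmega (u ++ [a]) ∨
          Disjoint (ConeOmega (List.ofFn f)) (ConeOmega (u ++ [a])) :=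
      fun a _ _ => coneOmega_subset_or_disjoint (by simp)
    calc depthSum μ (u.length + (d + 1)) (ConeOmega u)
        = depthSum μ (u.length + (d + 1)) (⋃ a ∈ Finset.univ, ConeOmega (u ++ [a])) := by
          simp only [Finset.mem_univ, Set.iUnion_true, ← coneOmega_eq_iUnion_append]
      _ = ∑ a, μ (ConeOmega (u ++ [a])) := by
          rw [depthSum_biUnion μ (fun a _ b _ hab => pairwise_disjoint_coneOmega_append u hab)
            hdich]
          exact Finset.sum_congr rfl fun a _ => hchild a
      _ = μ (ConeOmega u) := (hμ u).symm

theorem eventually_depthSum_eq [Nonempty A] {μ : Set (ℕ → A) → ℝ≥0∞} (h0 : μ ∅ = 0)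
    (hμ : ∀ u : List A, μ (ConeOmega u) = ∑ a : A, μ (ConeOmega (u ++ [a])))
    {s : Set (ℕ → A)} (hs : s ∈ SOmega A) : ∀ᶠ N in Filter.atTop, depthSum μ N s = μ s := by
  rcases hs with rfl | ⟨u, rfl⟩
  · exact Filter.Eventually.of_forall fun N => (depthSum_empty μ N).trans h0.symm
  · exact (Filter.eventually_ge_atTop u.length).mono fun N hN => depthSum_coneOmega hμ hN

theorem measure_biUnion_finset_of_mem_sOmega [Nonempty A] {μ : Set (ℕ → A) → ℝ≥0∞}
    (h0 : μ ∅ = 0) (hμ : ∀ u : List A, μ (ConeOmega u) = ∑ a : A, μ (ConeOmega (u ++ [a])))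
    {ι : Type*} {t : Finset ι} {s : ι → Set (ℕ → A)} (hs : ∀ i ∈ t, s i ∈ SOmega A)
    (hdisj : (t : Set ι).PairwiseDisjoint s) (hU : (⋃ i ∈ t, s i) ∈ SOmega A) :
    μ (⋃ i ∈ t, s i) = ∑ i ∈ t, μ (s i) := by
  obtain ⟨N, hNU, hN⟩ := ((eventually_depthSum_eq h0 hμ hU).and
    ((Filter.eventually_all_finset t).mpr fun i hi => (eventually_depthSum_eq h0 hμ (hs i hi)).and
      (eventually_coneOmega_subset_or_disjoint (hs i hi)))).exists
  rw [← hNU, depthSum_biUnion μ hdisj fun i hi => (hN i hi).2]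
  exact Finset.sum_congr rfl fun i hi => (hN i hi).1

end DepthSum

/-- `μ` with `μ ∅ = 0` is σ-additive on `S_ω` iff
`μ(Cone_ω u) = Σ_{a ∈ A} μ(Cone_ω (u ++ [a]))` for all finite words `u`. -/
theorem sOmega_sigma_additive_iff (A : Type*) [Fintype A]
    (μ : Set (ℕ → A) → ℝ≥0∞) (h0 : μ ∅ = 0) :
    SigmaAdditiveOn (SOmega A) μ ↔
      ∀ u : List A, μ (ConeOmega u) = ∑ a : A, μ (ConeOmega (u ++ [a])) := by
  constructor
  · intro hσ u
    have hU : (⋃ a, ConeOmega (u ++ [a])) ∈ SOmega A :=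
      coneOmega_eq_iUnion_append u ▸ Or.inr ⟨u, rfl⟩
    rw [coneOmega_eq_iUnion_append u]
    exact (hσ.measure_iUnion (Or.inl rfl) h0 (fun a => Or.inr ⟨_, rfl⟩)
      (pairwise_disjoint_coneOmega_append u) hU).trans (tsum_fintype _)
  · intro hμ S hS hdisj hU
    rcases isEmpty_or_nonempty A with _ | _
    · simp [Set.eq_empty_of_isEmpty, h0]
    · obtain ⟨t, ht⟩ := exists_finset_eq_empty_of_iUnion_mem_sOmega hS hdisj hU
      have hUt : ⋃ n, S n = ⋃ n ∈ t, S n := by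
        refine subset_antisymm (Set.iUnion_subset fun n => ?_) (iSup₂_le_iSup _ _)
        by_cases hn : n ∈ t
        · exact Set.subset_biUnion_of_mem hn
        · exact (ht n hn).trans_subset (Set.empty_subset _)
      rw [tsum_eq_sum fun n hn => by rw [ht n hn, h0], hUt]
      exact measure_biUnion_finset_of_mem_sOmega h0 hμ (fun n _ => hS n)
        (hdisj.set_pairwise _) (hUt ▸ hU)
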